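/- Let Y be a finite set, ε ∈ (0,1), p and g probability distributions on Y, and Π = B(g,ε) the fixed-width log-probability binning of g. Define the binned calibration error MC_ε(p,g) := (1/2)∑_{B∈Π}|p(B) − g(B)|. Then ‖p^Π − g‖_TV − ε ≤ MC_ε(p,g) ≤ ‖p^Π − g‖_TV. -/
import Mathlib


open Finset

/-- A partition of a finite type `Y`, given as the map sending each element to its block. -/
def IsBlockFun {Y : Type*} [Fintype Y] (π : Y → Finset Y) : Prop :=
  (∀ y, y ∈ π y) ∧ ∀ y z, z ∈ π y → π z = π y

/-- The `π`-coarsening of `p`: each element gets the average of `p` over its block. -/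
noncomputable def coarsen {Y : Type*} [Fintype Y] (p : Y → ℝ) (π : Y → Finset Y) (y : Y) : ℝ :=
  (∑ z ∈ π y, p z) / (π y).card

open scoped Classical

/-- The fixed-width log-probability bin (block) of  under  with parameter . -/
noncomputable def binBlock {Y : Type*} [Fintype Y] (g : Y → ℝ) (ε : ℝ) (y : Y) : Finset Y :=
  Finset.univ.filter (fun z =>
    (g y = 0 ∧ g z = 0) ∨ ∃ i : ℕ, g y ∈ Set.Ioc ((1-ε)^(i+1)) ((1-ε)^i)
      ∧ g z ∈ Set.Ioc ((1-ε)^(i+1)) ((1-ε)^i))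

section Aux

variable {Y : Type*} [Fintype Y]

lemma filter_eq_block {π : Y → Finset Y} (hπ : IsBlockFun π) (y : Y) :
    univ.filter (fun z => π z = π y) = π y := by
  ext z
  simp only [mem_filter, mem_univ, true_and]
  constructor
  · intro h; rw [← h]; exact hπ.1 z
  · exact hπ.2 y z

lemma sum_over_blocks {π : Y → Finset Y} (hπ : IsBlockFun π) (f : Y → ℝ) :
    ∑ B ∈ univ.image π, ∑ y ∈ B, f y = ∑ y, f y := by
  rw [← Finset.sum_fiberwise_of_maps_to (fun x _ => mem_image_of_mem π (mem_univ x)) f]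
  refine sum_congr rfl fun B hB => ?_
  obtain ⟨y, -, rfl⟩ := mem_image.1 hB
  rw [filter_eq_block hπ]

lemma coarsen_sum_block {π : Y → Finset Y} (hπ : IsBlockFun π) (p : Y → ℝ) (y : Y) :
    ∑ z ∈ π y, coarsen p π z = ∑ z ∈ π y, p z := by
  have hcard : (0:ℝ) < (π y).card := by exact_mod_cast card_pos.2 ⟨y, hπ.1 y⟩
  have h : ∀ z ∈ π y, coarsen p π z = (∑ w ∈ π y, p w) / (π y).card := by
    intro z hz; rw [coarsen, hπ.2 y z hz]
  rw [sum_congr rfl h, sum_const, nsmul_eq_mul]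
  field_simp

lemma sum_coarsen {π : Y → Finset Y} (hπ : IsBlockFun π) (p : Y → ℝ) :
    ∑ y, coarsen p π y = ∑ y, p y := by
  rw [← sum_over_blocks hπ (coarsen p π), ← sum_over_blocks hπ p]
  refine sum_congr rfl fun B hB => ?_
  obtain ⟨y, -, rfl⟩ := mem_image.1 hB
  exact coarsen_sum_block hπ p y

lemma bin_exists {ε x : ℝ} (hε : ε ∈ Set.Ioo (0:ℝ) 1) (hx0 : 0 < x) (hx1 : x ≤ 1) :
    ∃ i : ℕ, x ∈ Set.Ioc ((1-ε)^(i+1)) ((1-ε)^i) := by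
  have h1 : 0 ≤ 1 - ε := by linarith [hε.2]
  have h2 : 1 - ε < 1 := by linarith [hε.1]
  obtain ⟨n, hn⟩ := exists_pow_lt_of_lt_one hx0 h2
  have hS : ∃ i : ℕ, (1-ε)^(i+1) < x :=
    ⟨n, lt_of_le_of_lt (pow_le_pow_of_le_one h1 h2.le (Nat.le_succ n)) hn⟩
  refine ⟨Nat.find hS, Nat.find_spec hS, ?_⟩
  rcases Nat.eq_zero_or_pos (Nat.find hS) with h | h
  · rw [h]; simpa using hx1
  · have hmin := Nat.find_min hS (m := Nat.find hS - 1) (by omega)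
    have hi : Nat.find hS - 1 + 1 = Nat.find hS := by omega
    rw [hi] at hmin
    linarith [not_lt.1 hmin]

lemma bin_unique' {ε x : ℝ} (hε : ε ∈ Set.Ioo (0:ℝ) 1) {i j : ℕ}
    (hi : x ∈ Set.Ioc ((1-ε)^(i+1)) ((1-ε)^i))
    (hj : x ∈ Set.Ioc ((1-ε)^(j+1)) ((1-ε)^j)) : i = j := by
  have h1 : 0 ≤ 1 - ε := by linarith [hε.2]
  have h2 : 1 - ε ≤ 1 := by linarith [hε.1]
  by_contra h
  rcases Nat.lt_or_ge i j with hlt | hge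
  · have : (1-ε)^j ≤ (1-ε)^(i+1) := pow_le_pow_of_le_one h1 h2 hlt
    linarith [hj.2, hi.1]
  · have hlt : j < i := lt_of_le_of_ne hge (Ne.symm h)
    have : (1-ε)^i ≤ (1-ε)^(j+1) := pow_le_pow_of_le_one h1 h2 (by omega)
    linarith [hi.2, hj.1]

lemma mem_binBlock {g : Y → ℝ} {ε : ℝ} {y z : Y} :
    z ∈ binBlock g ε y ↔ (g y = 0 ∧ g z = 0) ∨ ∃ i : ℕ,
      g y ∈ Set.Ioc ((1-ε)^(i+1)) ((1-ε)^i) ∧ g z ∈ Set.Ioc ((1-ε)^(i+1)) ((1-ε)^i) := by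
  simp [binBlock]

lemma zero_not_mem_Ioc {ε : ℝ} (hε : ε ∈ Set.Ioo (0:ℝ) 1) (i : ℕ) {x : ℝ} (hx : x = 0) :
    x ∉ Set.Ioc ((1-ε)^(i+1)) ((1-ε)^i) := by
  intro h
  have : (0:ℝ) < (1-ε)^(i+1) := pow_pos (by linarith [hε.2]) _
  rw [hx] at h
  linarith [h.1]

lemma binBlock_isBlockFun {g : Y → ℝ} {ε : ℝ} (hε : ε ∈ Set.Ioo (0:ℝ) 1)
    (hg : ∀ y, 0 ≤ g y) (hgle : ∀ y, g y ≤ 1) : IsBlockFun (binBlock g ε) := by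
  constructor
  · intro y
    rw [mem_binBlock]
    rcases eq_or_lt_of_le (hg y) with h | h
    · exact Or.inl ⟨h.symm, h.symm⟩
    · obtain ⟨i, hi⟩ := bin_exists hε h (hgle y)
      exact Or.inr ⟨i, hi, hi⟩
  · intro y z hz
    rw [mem_binBlock] at hz
    ext w
    rw [mem_binBlock, mem_binBlock]
    rcases hz with ⟨hy0, hz0⟩ | ⟨i, hyi, hzi⟩
    · constructor
      · rintro (⟨-, hw⟩ | ⟨j, hzj, -⟩)
        · exact Or.inl ⟨hy0, hw⟩
        · exact absurd hzj (zero_not_mem_Ioc hε j hz0)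
      · rintro (⟨-, hw⟩ | ⟨j, hyj, -⟩)
        · exact Or.inl ⟨hz0, hw⟩
        · exact absurd hyj (zero_not_mem_Ioc hε j hy0)
    · have hzne : g z ≠ 0 := fun h => zero_not_mem_Ioc hε i h hzi
      have hyne : g y ≠ 0 := fun h => zero_not_mem_Ioc hε i h hyi
      constructor
      · rintro (⟨hz0, -⟩ | ⟨j, hzj, hwj⟩)
        · exact absurd hz0 hzne
        · exact Or.inr ⟨i, hyi, (bin_unique' hε hzj hzi) ▸ hwj⟩
      · rintro (⟨hy0, -⟩ | ⟨j, hyj, hwj⟩)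
        · exact absurd hy0 hyne
        · exact Or.inr ⟨i, hzi, (bin_unique' hε hyj hyi) ▸ hwj⟩

lemma coarsen_g_close {g : Y → ℝ} {ε : ℝ} (hε : ε ∈ Set.Ioo (0:ℝ) 1)
    (hg : ∀ y, 0 ≤ g y) (hgle : ∀ y, g y ≤ 1) (y : Y) :
    |coarsen g (binBlock g ε) y - g y| ≤ ε * (g y + coarsen g (binBlock g ε) y) := by
  have hπ := binBlock_isBlockFun hε hg hgle
  have hne : (binBlock g ε y).Nonempty := ⟨y, hπ.1 y⟩
  have hcard : (0:ℝ) < (binBlock g ε y).card := by exact_mod_cast card_pos.2 hne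
  rcases eq_or_lt_of_le (hg y) with h0 | h0
  · have hz : ∀ z ∈ binBlock g ε y, g z = 0 := by
      intro z hz
      rcases mem_binBlock.1 hz with ⟨-, h⟩ | ⟨j, hyj, -⟩
      · exact h
      · exact absurd hyj (zero_not_mem_Ioc hε j h0.symm)
    have : coarsen g (binBlock g ε) y = 0 := by
      rw [coarsen, sum_congr rfl hz, sum_const, smul_zero, zero_div]
    rw [this, ← h0]
    simp
  · obtain ⟨i, hi⟩ := bin_exists hε h0 (hgle y)
    have hyne : g y ≠ 0 := ne_of_gt h0
    have hz : ∀ z ∈ binBlock g ε y, g z ∈ Set.Ioc ((1-ε)^(i+1)) ((1-ε)^i) := by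
      intro z hz
      rcases mem_binBlock.1 hz with ⟨h, -⟩ | ⟨j, hyj, hzj⟩
      · exact absurd h hyne
      · exact (bin_unique' hε hyj hi) ▸ hzj
    set μ := coarsen g (binBlock g ε) y with hμ
    have hsum_le : ∑ z ∈ binBlock g ε y, g z ≤ (binBlock g ε y).card * (1-ε)^i := by
      calc ∑ z ∈ binBlock g ε y, g z ≤ ∑ _z ∈ binBlock g ε y, (1-ε)^i :=
            sum_le_sum fun z hzz => (hz z hzz).2
        _ = (binBlock g ε y).card * (1-ε)^i := by rw [sum_const, nsmul_eq_mul]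
    have hsum_gt : (binBlock g ε y).card * (1-ε)^(i+1) < ∑ z ∈ binBlock g ε y, g z := by
      calc ((binBlock g ε y).card : ℝ) * (1-ε)^(i+1)
          = ∑ _z ∈ binBlock g ε y, (1-ε)^(i+1) := by rw [sum_const, nsmul_eq_mul]
        _ < ∑ z ∈ binBlock g ε y, g z :=
            sum_lt_sum_of_nonempty hne fun z hzz => (hz z hzz).1
    have hμu : μ ≤ (1-ε)^i := by
      rw [hμ, coarsen, div_le_iff₀ hcard]
      linarith [hsum_le]
    have hμl : (1-ε)^(i+1) < μ := by
      rw [hμ, coarsen, lt_div_iff₀ hcard]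
      linarith [hsum_gt]
    have hps : (1-ε)^(i+1) = (1-ε)^i * (1-ε) := pow_succ _ _
    have hεp := hε.1
    have hεl := hε.2
    have hgy1 := hi.1
    have hgy2 := hi.2
    have hμ0 : 0 ≤ μ := le_trans (le_of_lt (pow_pos (by linarith) _)) hμl.le
    rw [abs_sub_le_iff]
    constructor <;> nlinarith [h0.le]

end Aux

theorem stmt13 {Y : Type*} [Fintype Y] (ε : ℝ) (hε : ε ∈ Set.Ioo (0:ℝ) 1)
    (p g : Y → ℝ) (hp : ∀ y, 0 ≤ p y) (hp1 : ∑ y, p y = 1)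
    (hg : ∀ y, 0 ≤ g y) (hg1 : ∑ y, g y = 1) :
    (1/2) * (∑ y, |coarsen p (binBlock g ε) y - g y|) - ε ≤
      (1/2) * ∑ B ∈ Finset.univ.image (binBlock g ε),
        |(∑ y ∈ B, p y) - ∑ y ∈ B, g y| ∧
    (1/2) * (∑ B ∈ Finset.univ.image (binBlock g ε),
        |(∑ y ∈ B, p y) - ∑ y ∈ B, g y|) ≤
      (1/2) * ∑ y, |coarsen p (binBlock g ε) y - g y| := by
  have hgle : ∀ y, g y ≤ 1 := fun y =>
    hg1 ▸ Finset.single_le_sum (fun i _ => hg i) (mem_univ y)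
  set π := binBlock g ε with hπdef
  have hπ : IsBlockFun π := binBlock_isBlockFun hε hg hgle
  have key1 : ∑ B ∈ univ.image π, |(∑ y ∈ B, p y) - ∑ y ∈ B, g y|
      ≤ ∑ y, |coarsen p π y - g y| := by
    rw [← sum_over_blocks hπ (fun y => |coarsen p π y - g y|)]
    refine sum_le_sum fun B hB => ?_
    obtain ⟨y0, -, rfl⟩ := mem_image.1 hB
    rw [← coarsen_sum_block hπ p y0, ← sum_sub_distrib]
    exact Finset.abs_sum_le_sum_abs _ _
  have key2 : ∑ y, |coarsen p π y - coarsen g π y|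
      = ∑ B ∈ univ.image π, |(∑ y ∈ B, p y) - ∑ y ∈ B, g y| := by
    rw [← sum_over_blocks hπ (fun y => |coarsen p π y - coarsen g π y|)]
    refine sum_congr rfl fun B hB => ?_
    obtain ⟨y0, -, rfl⟩ := mem_image.1 hB
    have hcard : (0:ℝ) < (π y0).card := by exact_mod_cast card_pos.2 ⟨y0, hπ.1 y0⟩
    have h : ∀ z ∈ π y0, |coarsen p π z - coarsen g π z|
        = |(∑ y ∈ π y0, p y) - ∑ y ∈ π y0, g y| / (π y0).card := by
      intro z hz
      rw [coarsen, coarsen, hπ.2 y0 z hz, div_sub_div_same, abs_div, abs_of_pos hcard]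
    rw [sum_congr rfl h, sum_const, nsmul_eq_mul]
    field_simp
  have key3 : ∑ y, |coarsen g π y - g y| ≤ 2 * ε := by
    calc ∑ y, |coarsen g π y - g y| ≤ ∑ y, ε * (g y + coarsen g π y) :=
          sum_le_sum fun y _ => coarsen_g_close hε hg hgle y
      _ = ε * (∑ y, g y + ∑ y, coarsen g π y) := by rw [← mul_sum, sum_add_distrib]
      _ = 2 * ε := by rw [hg1, sum_coarsen hπ g, hg1]; ring
  have key4 : ∑ y, |coarsen p π y - g y|
      ≤ ∑ y, |coarsen p π y - coarsen g π y| + ∑ y, |coarsen g π y - g y| := by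
    rw [← sum_add_distrib]
    exact sum_le_sum fun y _ => abs_sub_le _ _ _
  constructor <;> linarith
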